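/- arXiv:2406.10465 — 3 statements merged into one kernel-verified Lean document; each statement's English description precedes it below -/
import Mathlib

section
/- Let P₂ ∈ ℝ and Γ₂ : [0,∞) → ℝ be measurable with ∫|Γ₂(y)|(1+y²)dν(y) < ∞, and assume A := ∫(P₂+Γ₂(y))y² λ dν(y) > 0. Then inf_{u≥0} G₂(u,P₂,Γ₂) = − [ (P₂b − ∫Γ₂(y)y λ dν(y))⁺ ]² / A, and this infimum is attained at û₂ := (P₂b − ∫Γ₂(y)y λ dν(y))⁺ / A. -/
open MeasureTheory Real Set

/-- `G₂(u,P₂,Γ₂) := ∫ (P₂+Γ₂(y))·(((1+uy)⁺)² − 1) λ dν(y) − 2uP₂(b+λb_Y)`. -/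
noncomputable def G2 (ν : Measure ℝ) (lam b P₂ : ℝ) (Γ₂ : ℝ → ℝ) (u : ℝ) : ℝ :=
  lam * ∫ y, (P₂ + Γ₂ y) * ((max (1 + u * y) 0) ^ 2 - 1) ∂ν
    - 2 * u * P₂ * (b + lam * ∫ y, y ∂ν)

/-! On `u ≥ 0` the positive part in `G₂` is inactive (`ν` lives on `[0,∞)`), so `G₂` is the
quadratic `A u² - 2 B u` with `B = P₂ b - λ ∫ Γ₂(y) y dν`: the `λ b_Y` term cancels against the
linear part of the integral. Its minimum over `u ≥ 0` is at `B⁺ / A`, with value `-(B⁺)² / A`. -/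

theorem isLeast_quadratic_image_Ici {A : ℝ} (hA : 0 < A) (B : ℝ) :
    IsLeast ((fun u => A * u ^ 2 - 2 * B * u) '' Ici 0) (-(max B 0) ^ 2 / A) ∧
      A * (max B 0 / A) ^ 2 - 2 * B * (max B 0 / A) = -(max B 0) ^ 2 / A := by
  have hBM : B * max B 0 = max B 0 ^ 2 := by
    rcases le_total B 0 with h | h
    · rw [max_eq_right h]; ring
    · rw [max_eq_left h]; ring
  have hval : A * (max B 0 / A) ^ 2 - 2 * B * (max B 0 / A) = -(max B 0) ^ 2 / A := by
    field_simp
    linear_combination (-2) * hBM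
  refine ⟨⟨⟨max B 0 / A, div_nonneg (le_max_right _ _) hA.le, hval⟩, ?_⟩, hval⟩
  rintro _ ⟨u, hu, rfl⟩
  rw [div_le_iff₀ hA]
  have hBu : B * u ≤ max B 0 * u := mul_le_mul_of_nonneg_right (le_max_left _ _) hu
  nlinarith [sq_nonneg (A * u - max B 0)]

theorem integrable_mul_of_integrable_abs_mul_one_add_sq {ν : Measure ℝ} {g h : ℝ → ℝ}
    (hg : AEStronglyMeasurable g ν) (hh : AEStronglyMeasurable h ν)
    (hint : Integrable (fun y => |g y| * (1 + y ^ 2)) ν) (hle : ∀ y, |h y| ≤ 1 + y ^ 2) :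
    Integrable (fun y => g y * h y) ν :=
  hint.mono' (hg.mul hh) <| .of_forall fun y => by
    rw [norm_eq_abs, abs_mul]
    exact mul_le_mul_of_nonneg_left (hle y) (abs_nonneg _)

theorem G2_eq_quadratic {ν : Measure ℝ} (hν0 : ∀ᵐ y ∂ν, 0 ≤ y) (lam b : ℝ)
    (hy : Integrable (fun y => y) ν) (hy2 : Integrable (fun y => y ^ 2) ν)
    (P₂ : ℝ) {Γ₂ : ℝ → ℝ} (hΓm : Measurable Γ₂)
    (hΓ : Integrable (fun y => |Γ₂ y| * (1 + y ^ 2)) ν) {u : ℝ} (hu : 0 ≤ u) :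
    G2 ν lam b P₂ Γ₂ u = (lam * ∫ y, (P₂ + Γ₂ y) * y ^ 2 ∂ν) * u ^ 2
      - 2 * (P₂ * b - lam * ∫ y, Γ₂ y * y ∂ν) * u := by
  have hΓ1 : Integrable (fun y => Γ₂ y * y) ν :=
    integrable_mul_of_integrable_abs_mul_one_add_sq hΓm.aestronglyMeasurable
      aestronglyMeasurable_id hΓ fun y => by
        nlinarith [abs_nonneg y, sq_abs y, sq_nonneg (|y| - 1)]
  have hΓ2 : Integrable (fun y => Γ₂ y * y ^ 2) ν :=
    integrable_mul_of_integrable_abs_mul_one_add_sq hΓm.aestronglyMeasurable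
      (measurable_id.pow_const 2).aestronglyMeasurable hΓ fun y => by
        rw [abs_of_nonneg (sq_nonneg y)]; linarith
  have hi1 : Integrable (fun y => (P₂ + Γ₂ y) * y) ν := by
    refine ((hy.const_mul P₂).add hΓ1).congr (.of_forall fun y => ?_)
    simp only [Pi.add_apply]; ring
  have hi2 : Integrable (fun y => (P₂ + Γ₂ y) * y ^ 2) ν := by
    refine ((hy2.const_mul P₂).add hΓ2).congr (.of_forall fun y => ?_)
    simp only [Pi.add_apply]; ring
  have hexpand : ∫ y, (P₂ + Γ₂ y) * ((max (1 + u * y) 0) ^ 2 - 1) ∂ν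
      = 2 * u * ∫ y, (P₂ + Γ₂ y) * y ∂ν + u ^ 2 * ∫ y, (P₂ + Γ₂ y) * y ^ 2 ∂ν := by
    rw [← integral_const_mul, ← integral_const_mul,
      ← integral_add (hi1.const_mul _) (hi2.const_mul _)]
    refine integral_congr_ae ?_
    filter_upwards [hν0] with y hy0
    rw [max_eq_left (by positivity)]
    ring
  have hsplit : ∫ y, (P₂ + Γ₂ y) * y ∂ν = P₂ * ∫ y, y ∂ν + ∫ y, Γ₂ y * y ∂ν := by
    rw [← integral_const_mul, ← integral_add (hy.const_mul P₂) hΓ1]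
    simp only [add_mul]
  rw [G2, hexpand, hsplit]
  ring

theorem stmt1_general (ν : Measure ℝ)
    (hν0 : ∀ᵐ y ∂ν, 0 ≤ y)
    (lam b : ℝ)
    (hy : Integrable (fun y => y) ν)
    (hy2 : Integrable (fun y => y ^ 2) ν)
    (P₂ : ℝ) (Γ₂ : ℝ → ℝ) (hΓm : Measurable Γ₂)
    (hΓ : Integrable (fun y => |Γ₂ y| * (1 + y ^ 2)) ν)
    (A : ℝ) (hA : A = lam * ∫ y, (P₂ + Γ₂ y) * y ^ 2 ∂ν) (hApos : 0 < A) :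
    IsLeast ((fun u => G2 ν lam b P₂ Γ₂ u) '' Set.Ici 0)
      (-(max (P₂ * b - lam * ∫ y, Γ₂ y * y ∂ν) 0) ^ 2 / A)
    ∧ G2 ν lam b P₂ Γ₂ ((max (P₂ * b - lam * ∫ y, Γ₂ y * y ∂ν) 0) / A)
      = -(max (P₂ * b - lam * ∫ y, Γ₂ y * y ∂ν) 0) ^ 2 / A := by
  have hG : ∀ u ∈ Ici (0 : ℝ), G2 ν lam b P₂ Γ₂ u
      = A * u ^ 2 - 2 * (P₂ * b - lam * ∫ y, Γ₂ y * y ∂ν) * u := fun u hu => by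
    rw [hA]; exact G2_eq_quadratic hν0 lam b hy hy2 P₂ hΓm hΓ hu
  obtain ⟨hleast, hval⟩ := isLeast_quadratic_image_Ici hApos (P₂ * b - lam * ∫ y, Γ₂ y * y ∂ν)
  refine ⟨(image_congr hG).symm ▸ hleast, ?_⟩
  rw [hG _ (div_nonneg (le_max_right _ _) hApos.le), hval]

/-- if `A := ∫(P₂+Γ₂(y))y² λ dν(y) > 0` then
`inf_{u≥0} G₂(u,P₂,Γ₂) = −[(P₂b − ∫Γ₂(y)y λ dν(y))⁺]²/A`, attained at
`û₂ = (P₂b − ∫Γ₂(y)y λ dν(y))⁺/A`. -/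
theorem stmt1 (ν : Measure ℝ) [IsProbabilityMeasure ν]
    (hν0 : ∀ᵐ y ∂ν, 0 ≤ y)
    (lam b : ℝ) (hlam : 0 < lam) (hb : 0 < b)
    (hy : Integrable (fun y => y) ν)
    (hy2 : Integrable (fun y => y ^ 2) ν)
    (hbY : 0 < ∫ y, y ∂ν)
    (P₂ : ℝ) (Γ₂ : ℝ → ℝ) (hΓm : Measurable Γ₂)
    (hΓ : Integrable (fun y => |Γ₂ y| * (1 + y ^ 2)) ν)
    (A : ℝ) (hA : A = lam * ∫ y, (P₂ + Γ₂ y) * y ^ 2 ∂ν) (hApos : 0 < A) :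
    IsLeast ((fun u => G2 ν lam b P₂ Γ₂ u) '' Set.Ici 0)
      (-(max (P₂ * b - lam * ∫ y, Γ₂ y * y ∂ν) 0) ^ 2 / A)
    ∧ G2 ν lam b P₂ Γ₂ ((max (P₂ * b - lam * ∫ y, Γ₂ y * y ∂ν) 0) / A)
      = -(max (P₂ * b - lam * ∫ y, Γ₂ y * y ∂ν) 0) ^ 2 / A :=
  stmt1_general ν hν0 lam b hy hy2 P₂ Γ₂ hΓm hΓ A hA hApos
end

section
/- Fix k > 0, P₂ ∈ ℝ and measurable Γ₂, Γ̃₂ : [0,∞) → ℝ, each with ∫|·(y)|(1+y²)dν(y) < ∞. Define ρ′(y) := (k²y² + 2ky)·𝟙_{Γ₂(y) < Γ̃₂(y)}. Then 0 ≤ ρ′(y) ≤ k²y² + 2ky for every y ≥ 0, and (inf_{0≤u≤k} G₂(u,P₂,Γ₂)) − (inf_{0≤u≤k} G₂(u,P₂,Γ̃₂)) ≥ ∫ ρ′(y)·(Γ₂(y) − Γ̃₂(y)) λ dν(y). -/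
open MeasureTheory Real Set

section Pointwise

variable {u k y : ℝ}

lemma sq_max_one_add_mul_sub_one_nonneg (hu : 0 ≤ u) (hy : 0 ≤ y) :
    0 ≤ max (1 + u * y) 0 ^ 2 - 1 := by
  rw [max_eq_left (by positivity)]
  nlinarith [mul_nonneg hu hy]

lemma sq_max_one_add_mul_sub_one_le (hu : 0 ≤ u) (huk : u ≤ k) (hy : 0 ≤ y) :
    max (1 + u * y) 0 ^ 2 - 1 ≤ k ^ 2 * y ^ 2 + 2 * k * y := by
  have huy : u * y ≤ k * y := mul_le_mul_of_nonneg_right huk hy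
  rw [max_eq_left (by positivity)]
  nlinarith [mul_nonneg hu hy]

lemma sq_mul_sq_add_two_mul_le (hk : 0 ≤ k) (y : ℝ) :
    k ^ 2 * y ^ 2 + 2 * k * y ≤ (k ^ 2 + 2 * k) * (1 + y ^ 2) := by
  nlinarith [mul_nonneg hk (sq_nonneg (y - 1)), mul_nonneg hk (sq_nonneg y)]

lemma sq_max_one_add_mul_sub_one_le_mul_one_add_sq (hu : 0 ≤ u) (hy : 0 ≤ y) :
    max (1 + u * y) 0 ^ 2 - 1 ≤ (u ^ 2 + 2 * u) * (1 + y ^ 2) :=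
  (sq_max_one_add_mul_sub_one_le hu le_rfl hy).trans (sq_mul_sq_add_two_mul_le hu y)

lemma abs_mul_le_mul_abs_mul {a f C w : ℝ} (hf0 : 0 ≤ f) (hf : f ≤ C * w) :
    |a * f| ≤ C * (|a| * w) := by
  rw [abs_mul, abs_of_nonneg hf0]
  nlinarith [abs_nonneg a]

lemma ite_lt_mul_sub_le_sub_mul {a b f M : ℝ} (hf0 : 0 ≤ f) (hfM : f ≤ M) :
    (if a < b then M else 0) * (a - b) ≤ (a - b) * f := by
  split_ifs with hab
  · nlinarith
  · simpa using mul_nonneg (sub_nonneg.2 (not_lt.1 hab)) hf0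

end Pointwise

section WeightedIntegrability

variable {ν : Measure ℝ}

lemma integrable_abs_const_add_mul_one_add_sq [IsFiniteMeasure ν]
    (hy2 : Integrable (fun y => y ^ 2) ν) (c : ℝ) {Γ : ℝ → ℝ} (hΓm : Measurable Γ)
    (hΓ : Integrable (fun y => |Γ y| * (1 + y ^ 2)) ν) :
    Integrable (fun y => |c + Γ y| * (1 + y ^ 2)) ν := by
  refine ((((integrable_const 1).add hy2).const_mul |c|).add hΓ).mono' (by fun_prop)
    (ae_of_all _ fun y => ?_)
  rw [norm_of_nonneg (by positivity)]
  simpa only [Pi.add_apply, ← add_mul] using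
    mul_le_mul_of_nonneg_right (abs_add_le c (Γ y)) (by positivity : (0 : ℝ) ≤ 1 + y ^ 2)

lemma integrable_abs_sub_mul_one_add_sq {Γ Γ' : ℝ → ℝ} (hΓm : Measurable Γ)
    (hΓ'm : Measurable Γ') (hΓ : Integrable (fun y => |Γ y| * (1 + y ^ 2)) ν)
    (hΓ' : Integrable (fun y => |Γ' y| * (1 + y ^ 2)) ν) :
    Integrable (fun y => |Γ y - Γ' y| * (1 + y ^ 2)) ν := by
  refine (hΓ.add hΓ').mono' (by fun_prop) (ae_of_all _ fun y => ?_)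
  rw [norm_of_nonneg (by positivity)]
  simpa only [Pi.add_apply, ← add_mul] using
    mul_le_mul_of_nonneg_right (abs_sub (Γ y) (Γ' y)) (by positivity : (0 : ℝ) ≤ 1 + y ^ 2)

variable {g f : ℝ → ℝ} {C : ℝ}

lemma integrable_mul_of_le_mul_one_add_sq (hgm : Measurable g) (hfm : Measurable f)
    (hg : Integrable (fun y => |g y| * (1 + y ^ 2)) ν)
    (hf : ∀ᵐ y ∂ν, 0 ≤ f y ∧ f y ≤ C * (1 + y ^ 2)) :
    Integrable (fun y => g y * f y) ν :=
  (hg.const_mul C).mono' (by fun_prop) <| hf.mono fun _ hy => by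
    simpa only [norm_eq_abs] using abs_mul_le_mul_abs_mul hy.1 hy.2

lemma abs_integral_mul_le_of_le_mul_one_add_sq
    (hg : Integrable (fun y => |g y| * (1 + y ^ 2)) ν)
    (hf : ∀ᵐ y ∂ν, 0 ≤ f y ∧ f y ≤ C * (1 + y ^ 2)) :
    |∫ y, g y * f y ∂ν| ≤ C * ∫ y, |g y| * (1 + y ^ 2) ∂ν := by
  rw [← integral_const_mul, ← norm_eq_abs]
  exact norm_integral_le_of_norm_le (hg.const_mul C) <| hf.mono fun _ hy => by
    simpa only [norm_eq_abs] using abs_mul_le_mul_abs_mul hy.1 hy.2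

end WeightedIntegrability

lemma le_csInf_image_sub_csInf_image {α : Type*} {s : Set α} {f g : α → ℝ} {c : ℝ}
    (hs : s.Nonempty) (hg : BddBelow (g '' s)) (hfg : ∀ x ∈ s, g x + c ≤ f x) :
    c ≤ sInf (f '' s) - sInf (g '' s) := by
  rw [le_sub_iff_add_le']
  exact le_csInf (hs.image f) <| forall_mem_image.2 fun x hx =>
    (add_le_add_left (csInf_le hg (mem_image_of_mem g hx)) c).trans (hfg x hx)

section G2

variable {ν : Measure ℝ} (lam b P₂ : ℝ) {Γ Γ' : ℝ → ℝ} {u : ℝ}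

lemma G2_sub_G2
    (hI : Integrable (fun y => (P₂ + Γ y) * (max (1 + u * y) 0 ^ 2 - 1)) ν)
    (hI' : Integrable (fun y => (P₂ + Γ' y) * (max (1 + u * y) 0 ^ 2 - 1)) ν) :
    G2 ν lam b P₂ Γ u - G2 ν lam b P₂ Γ' u
      = lam * ∫ y, (Γ y - Γ' y) * (max (1 + u * y) 0 ^ 2 - 1) ∂ν := by
  simp only [G2]
  rw [sub_sub_sub_cancel_right, ← mul_sub, ← integral_sub hI hI']
  congr 2 with y
  ring

variable [IsFiniteMeasure ν] (hν0 : ∀ᵐ y ∂ν, 0 ≤ y) (hy2 : Integrable (fun y => y ^ 2) ν)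
  (hΓm : Measurable Γ) (hΓ : Integrable (fun y => |Γ y| * (1 + y ^ 2)) ν)
include hν0 hy2 hΓm hΓ

lemma integrable_G2_integrand (hu : 0 ≤ u) :
    Integrable (fun y => (P₂ + Γ y) * (max (1 + u * y) 0 ^ 2 - 1)) ν :=
  integrable_mul_of_le_mul_one_add_sq (by fun_prop) (by fun_prop)
    (integrable_abs_const_add_mul_one_add_sq hy2 P₂ hΓm hΓ) <| hν0.mono fun _ hy =>
      ⟨sq_max_one_add_mul_sub_one_nonneg hu hy, sq_max_one_add_mul_sub_one_le_mul_one_add_sq hu hy⟩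

lemma G2_bddBelow (k : ℝ) : BddBelow (G2 ν lam b P₂ Γ '' Icc 0 k) := by
  refine ⟨-(|lam| * ((k ^ 2 + 2 * k) * ∫ y, |P₂ + Γ y| * (1 + y ^ 2) ∂ν))
    - 2 * k * |P₂ * (b + lam * ∫ y, y ∂ν)|, forall_mem_image.2 fun u ⟨hu, huk⟩ => ?_⟩
  have hI : |∫ y, (P₂ + Γ y) * (max (1 + u * y) 0 ^ 2 - 1) ∂ν|
      ≤ (k ^ 2 + 2 * k) * ∫ y, |P₂ + Γ y| * (1 + y ^ 2) ∂ν :=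
    abs_integral_mul_le_of_le_mul_one_add_sq
      (integrable_abs_const_add_mul_one_add_sq hy2 P₂ hΓm hΓ) <| hν0.mono fun y hy =>
        ⟨sq_max_one_add_mul_sub_one_nonneg hu hy,
          (sq_max_one_add_mul_sub_one_le hu huk hy).trans
            (sq_mul_sq_add_two_mul_le (hu.trans huk) y)⟩
  have hlamI := mul_le_mul_of_nonneg_left hI (abs_nonneg lam)
  rw [← abs_mul] at hlamI
  have hlin : 2 * u * (P₂ * (b + lam * ∫ y, y ∂ν)) ≤ 2 * k * |P₂ * (b + lam * ∫ y, y ∂ν)| :=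
    calc 2 * u * (P₂ * (b + lam * ∫ y, y ∂ν)) ≤ 2 * u * |P₂ * (b + lam * ∫ y, y ∂ν)| := by
          gcongr; exact le_abs_self _
      _ ≤ 2 * k * |P₂ * (b + lam * ∫ y, y ∂ν)| := by gcongr
  simp only [G2]
  linarith [neg_abs_le (lam * ∫ y, (P₂ + Γ y) * (max (1 + u * y) 0 ^ 2 - 1) ∂ν)]

end G2

theorem stmt3_general (ν : Measure ℝ) [IsProbabilityMeasure ν]
    (hν0 : ∀ᵐ y ∂ν, 0 ≤ y)
    (lam b : ℝ) (hlam : 0 < lam)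
    (hy2 : Integrable (fun y => y ^ 2) ν)
    (k : ℝ) (hk : 0 < k)
    (P₂ : ℝ) (Γ₂ Γ₂' : ℝ → ℝ)
    (hΓ₂m : Measurable Γ₂) (hΓ₂'m : Measurable Γ₂')
    (hΓ₂ : Integrable (fun y => |Γ₂ y| * (1 + y ^ 2)) ν)
    (hΓ₂' : Integrable (fun y => |Γ₂' y| * (1 + y ^ 2)) ν)
    (ρ' : ℝ → ℝ)
    (hρ' : ∀ y, ρ' y = if Γ₂ y < Γ₂' y then k ^ 2 * y ^ 2 + 2 * k * y else 0) :
    (∀ y : ℝ, 0 ≤ y → 0 ≤ ρ' y ∧ ρ' y ≤ k ^ 2 * y ^ 2 + 2 * k * y) ∧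
    sInf ((fun u => G2 ν lam b P₂ Γ₂ u) '' Set.Icc 0 k)
        - sInf ((fun u => G2 ν lam b P₂ Γ₂' u) '' Set.Icc 0 k)
      ≥ lam * ∫ y, ρ' y * (Γ₂ y - Γ₂' y) ∂ν := by
  have hρ_bounds (y : ℝ) (hy : 0 ≤ y) : 0 ≤ ρ' y ∧ ρ' y ≤ k ^ 2 * y ^ 2 + 2 * k * y := by
    rw [hρ']
    split_ifs <;> constructor <;> first | positivity | rfl
  have hρm : Measurable ρ' := by
    rw [funext hρ']
    exact Measurable.ite (measurableSet_lt hΓ₂m hΓ₂'m) (by fun_prop) measurable_const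
  have hρ_int : Integrable (fun y => ρ' y * (Γ₂ y - Γ₂' y)) ν := by
    simp_rw [mul_comm (ρ' _)]
    exact integrable_mul_of_le_mul_one_add_sq (by fun_prop) hρm
      (integrable_abs_sub_mul_one_add_sq hΓ₂m hΓ₂'m hΓ₂ hΓ₂') <| hν0.mono fun y hy =>
        ⟨(hρ_bounds y hy).1, (hρ_bounds y hy).2.trans (sq_mul_sq_add_two_mul_le hk.le y)⟩
  refine ⟨hρ_bounds, le_csInf_image_sub_csInf_image (nonempty_Icc.2 hk.le)
    (G2_bddBelow lam b P₂ hν0 hy2 hΓ₂'m hΓ₂' k) fun u ⟨hu, huk⟩ => ?_⟩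
  have hI := integrable_G2_integrand P₂ hν0 hy2 hΓ₂m hΓ₂ hu
  have hI' := integrable_G2_integrand P₂ hν0 hy2 hΓ₂'m hΓ₂' hu
  rw [← le_sub_iff_add_le', G2_sub_G2 lam b P₂ hI hI']
  refine mul_le_mul_of_nonneg_left (integral_mono_ae hρ_int ((hI.sub hI').congr
    (ae_of_all _ fun y => by simp only [Pi.sub_apply]; ring)) ?_) hlam.le
  filter_upwards [hν0] with y hy
  rw [hρ']
  exact ite_lt_mul_sub_le_sub_mul (sq_max_one_add_mul_sub_one_nonneg hu hy)
    (sq_max_one_add_mul_sub_one_le hu huk hy)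

/-- with `ρ′(y) = (k²y² + 2ky)·𝟙_{Γ₂(y) < Γ̃₂(y)}` one has
`0 ≤ ρ′(y) ≤ k²y² + 2ky` on `[0,∞)` and
`inf_{0≤u≤k} G₂(·,Γ₂) − inf_{0≤u≤k} G₂(·,Γ̃₂) ≥ ∫ ρ′(y)(Γ₂(y)−Γ̃₂(y)) λ dν(y)`. -/
theorem stmt3 (ν : Measure ℝ) [IsProbabilityMeasure ν]
    (hν0 : ∀ᵐ y ∂ν, 0 ≤ y)
    (lam b : ℝ) (hlam : 0 < lam) (hb : 0 < b)
    (hy : Integrable (fun y => y) ν)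
    (hy2 : Integrable (fun y => y ^ 2) ν)
    (hbY : 0 < ∫ y, y ∂ν)
    (k : ℝ) (hk : 0 < k)
    (P₂ : ℝ) (Γ₂ Γ₂' : ℝ → ℝ)
    (hΓ₂m : Measurable Γ₂) (hΓ₂'m : Measurable Γ₂')
    (hΓ₂ : Integrable (fun y => |Γ₂ y| * (1 + y ^ 2)) ν)
    (hΓ₂' : Integrable (fun y => |Γ₂' y| * (1 + y ^ 2)) ν)
    (ρ' : ℝ → ℝ)
    (hρ' : ∀ y, ρ' y = if Γ₂ y < Γ₂' y then k ^ 2 * y ^ 2 + 2 * k * y else 0) :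
    (∀ y : ℝ, 0 ≤ y → 0 ≤ ρ' y ∧ ρ' y ≤ k ^ 2 * y ^ 2 + 2 * k * y) ∧
    sInf ((fun u => G2 ν lam b P₂ Γ₂ u) '' Set.Icc 0 k)
        - sInf ((fun u => G2 ν lam b P₂ Γ₂' u) '' Set.Icc 0 k)
      ≥ lam * ∫ y, ρ' y * (Γ₂ y - Γ₂' y) ∂ν :=
  stmt3_general ν hν0 lam b hlam hy2 k hk P₂ Γ₂ Γ₂' hΓ₂m hΓ₂'m hΓ₂ hΓ₂' ρ' hρ'
end

section
/- Let β > 0, m, z ∈ ℝ, and A₁, A₂ > 0 satisfy A₁β² ≤ 1, A₂β² < 1, and z ≥ m/β. Define J(ζ) := A₁·((m − βζ)⁺)² + A₂·((m − βζ)⁻)² − (ζ − z)² for ζ ∈ ℝ, and set ζ̂ := (A₂βm − z)/(A₂β² − 1). Then ζ̂ ≥ m/β (equivalently m − βζ̂ ≤ 0), and J(ζ̂) = sup_{ζ∈ℝ} J(ζ) = (A₂β²/(1 − A₂β²))·(z − m/β)². -/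
/-!
On the half-line `m - βζ ≤ 0` the function `J` is the concave quadratic `A₂(βζ - m)² - (ζ - z)²`,
and completing the square shows that its maximum is attained at `ζ̂`, which lies on that half-line
because `z ≥ m/β`. On the other half-line `A₁β² ≤ 1` bounds `J` by `-(z - m/β)² = J(m/β)`,
so the maximum over that half-line is no larger.
-/

theorem mul_sq_sub_sq_eq_sub_mul_sq (A β m z ζ : ℝ) (hβ : β ≠ 0) (hA : A * β ^ 2 ≠ 1) :
    A * (β * ζ - m) ^ 2 - (ζ - z) ^ 2 =
      A * β ^ 2 / (1 - A * β ^ 2) * (z - m / β) ^ 2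
        - (1 - A * β ^ 2) * (ζ - (A * β * m - z) / (A * β ^ 2 - 1)) ^ 2 := by
  have h₁ : 1 - A * β ^ 2 ≠ 0 := sub_ne_zero.mpr hA.symm
  have h₂ : A * β ^ 2 - 1 ≠ 0 := sub_ne_zero.mpr hA
  field_simp
  ring

theorem sub_mul_vertex_nonpos (A β m z : ℝ) (hA : A * β ^ 2 < 1) (hm : m ≤ β * z) :
    m - β * ((A * β * m - z) / (A * β ^ 2 - 1)) ≤ 0 := by
  have hD : A * β ^ 2 - 1 < 0 := by linarith
  have hkey : m - β * ((A * β * m - z) / (A * β ^ 2 - 1)) = (β * z - m) / (A * β ^ 2 - 1) := by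
    rw [eq_div_iff hD.ne, sub_mul, mul_assoc β, div_mul_cancel₀ _ hD.ne]
    ring
  rw [hkey]
  exact div_nonpos_of_nonneg_of_nonpos (by linarith) hD.le

theorem mul_sq_sub_sq_le_neg_sq (A β m z ζ : ℝ) (hβ : 0 < β) (hA : A * β ^ 2 ≤ 1)
    (hζ : β * ζ ≤ m) (hm : m ≤ β * z) :
    A * (m - β * ζ) ^ 2 - (ζ - z) ^ 2 ≤ -(z - m / β) ^ 2 := by
  have hAsq : A * (m - β * ζ) ^ 2 ≤ (m / β - ζ) ^ 2 := by
    have : (m - β * ζ) ^ 2 = β ^ 2 * (m / β - ζ) ^ 2 := by field_simp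
    rw [this, ← mul_assoc]
    exact mul_le_of_le_one_left (sq_nonneg _) (by linarith)
  have ha : 0 ≤ m / β - ζ := by rw [sub_nonneg, le_div_iff₀ hβ]; linarith
  have hd : 0 ≤ z - m / β := by rw [sub_nonneg, div_le_iff₀ hβ]; linarith
  nlinarith [mul_nonneg ha hd]

theorem stmt15_general (β m z A₁ A₂ : ℝ) (hβ : 0 < β)
    (h₁ : A₁ * β ^ 2 ≤ 1) (h₂ : A₂ * β ^ 2 < 1) (hz : z ≥ m / β)
    (J : ℝ → ℝ)
    (hJ : ∀ ζ, J ζ = A₁ * (max (m - β * ζ) 0) ^ 2 + A₂ * (max (-(m - β * ζ)) 0) ^ 2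
        - (ζ - z) ^ 2)
    (ζhat : ℝ) (hζhat : ζhat = (A₂ * β * m - z) / (A₂ * β ^ 2 - 1)) :
    m / β ≤ ζhat ∧ m - β * ζhat ≤ 0 ∧
    IsGreatest (Set.range J) (J ζhat) ∧
    J ζhat = (A₂ * β ^ 2 / (1 - A₂ * β ^ 2)) * (z - m / β) ^ 2 := by
  have hm : m ≤ β * z := by rwa [ge_iff_le, div_le_iff₀' hβ] at hz
  have hζhat_nonpos : m - β * ζhat ≤ 0 := hζhat ▸ sub_mul_vertex_nonpos A₂ β m z h₂ hm
  have hJ_right : ∀ ζ, m - β * ζ ≤ 0 → J ζ =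
      A₂ * β ^ 2 / (1 - A₂ * β ^ 2) * (z - m / β) ^ 2 - (1 - A₂ * β ^ 2) * (ζ - ζhat) ^ 2 := by
    intro ζ hζ
    rw [hJ, max_eq_right hζ, max_eq_left (by linarith), hζhat,
      ← mul_sq_sub_sq_eq_sub_mul_sq A₂ β m z ζ hβ.ne' h₂.ne]
    ring
  have hJ_le : ∀ ζ, m - β * ζ ≤ 0 → J ζ ≤ J ζhat := fun ζ hζ => by
    rw [hJ_right ζ hζ, hJ_right ζhat hζhat_nonpos, sub_self]
    simpa using mul_nonneg (sub_nonneg.mpr h₂.le) (sq_nonneg (ζ - ζhat))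
  refine ⟨?_, hζhat_nonpos, ⟨⟨ζhat, rfl⟩, ?_⟩, by rw [hJ_right ζhat hζhat_nonpos, sub_self]; ring⟩
  · rw [div_le_iff₀ hβ]; linarith
  rintro _ ⟨ζ, rfl⟩
  rcases le_total (m - β * ζ) 0 with hζ | hζ
  · exact hJ_le ζ hζ
  · have hmβ : m - β * (m / β) = 0 := by rw [mul_div_cancel₀ _ hβ.ne', sub_self]
    calc J ζ = A₁ * (m - β * ζ) ^ 2 - (ζ - z) ^ 2 := by
          rw [hJ, max_eq_left hζ, max_eq_right (by linarith)]; ring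
      _ ≤ -(z - m / β) ^ 2 := mul_sq_sub_sq_le_neg_sq A₁ β m z ζ hβ h₁ (by linarith) hm
      _ = J (m / β) := by rw [hJ, hmβ, neg_zero, max_self]; ring
      _ ≤ J ζhat := hJ_le _ hmβ.le

/-- for `β > 0`, `A₁β² ≤ 1`, `A₂β² < 1`, `z ≥ m/β`, with
`J(ζ) = A₁((m−βζ)⁺)² + A₂((m−βζ)⁻)² − (ζ−z)²` and `ζ̂ = (A₂βm − z)/(A₂β² − 1)`:
`ζ̂ ≥ m/β` (equivalently `m − βζ̂ ≤ 0`) and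
`J(ζ̂) = sup_ζ J(ζ) = (A₂β²/(1 − A₂β²))(z − m/β)²`. -/
theorem stmt15 (β m z A₁ A₂ : ℝ) (hβ : 0 < β) (hA₁ : 0 < A₁) (hA₂ : 0 < A₂)
    (h₁ : A₁ * β ^ 2 ≤ 1) (h₂ : A₂ * β ^ 2 < 1) (hz : z ≥ m / β)
    (J : ℝ → ℝ)
    (hJ : ∀ ζ, J ζ = A₁ * (max (m - β * ζ) 0) ^ 2 + A₂ * (max (-(m - β * ζ)) 0) ^ 2
        - (ζ - z) ^ 2)
    (ζhat : ℝ) (hζhat : ζhat = (A₂ * β * m - z) / (A₂ * β ^ 2 - 1)) :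
    m / β ≤ ζhat ∧ m - β * ζhat ≤ 0 ∧
    IsGreatest (Set.range J) (J ζhat) ∧
    J ζhat = (A₂ * β ^ 2 / (1 - A₂ * β ^ 2)) * (z - m / β) ^ 2 :=
  stmt15_general β m z A₁ A₂ hβ h₁ h₂ hz J hJ ζhat hζhat
end
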